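/- arXiv:2011.09287 — 2 statements merged into one kernel-verified Lean document; each statement's English description precedes it below -/
import Mathlib

section
/- Let α, β ∈ (0, π/2) and γ = π/4, and let P₁₃ be the orthogonal projection onto span{a₁, a₃} ⊂ ℂ²⊗ℂ², where a₁ = cosα·|00⟩ − sinα·|11⟩ and a₃ = (1/√2)(sinα·|00⟩ + sinβ·|01⟩ + cosβ·|10⟩ + cosα·|11⟩). Then the partial transpose of P₁₃ has a strictly negative eigenvalue. -/
noncomputable section

open scoped ComplexOrder

/-- The two-qubit Hilbert space ℂ² ⊗ ℂ², modeled as ℂ^(2×2) with the standard inner product. -/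
abbrev TwoQubit : Type := EuclideanSpace ℂ (Fin 2 × Fin 2)

/-- The computational basis vector |ab⟩. -/
def ket (a b : Fin 2) : TwoQubit := EuclideanSpace.single (a, b) 1

/-- A vector is a product vector if it is of the form u ⊗ w. -/
def IsProductVec (v : TwoQubit) : Prop :=
  ∃ u w : Fin 2 → ℂ, ∀ a b : Fin 2, v (a, b) = u a * w b

/-- The 2×2 coefficient matrix of a vector in ℂ² ⊗ ℂ². -/
def coeffMat (v : TwoQubit) : Matrix (Fin 2) (Fin 2) ℂ :=
  Matrix.of fun a b => v (a, b)

/-- Partial transpose (on the second tensor factor) of an operator on ℂ² ⊗ ℂ². -/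
def ptrans (M : Matrix (Fin 2 × Fin 2) (Fin 2 × Fin 2) ℂ) :
    Matrix (Fin 2 × Fin 2) (Fin 2 × Fin 2) ℂ :=
  Matrix.of fun p q => M (p.1, q.2) (q.1, p.2)

/-- The matrix of the orthogonal projection vv* + ww* onto span{v, w} (for orthonormal v, w). -/
def projMat (v w : TwoQubit) : Matrix (Fin 2 × Fin 2) (Fin 2 × Fin 2) ℂ :=
  Matrix.of fun p q => v p * star (v q) + w p * star (w q)

/-- `M` has a strictly negative (real) eigenvalue. -/
def HasNegEig (M : Matrix (Fin 2 × Fin 2) (Fin 2 × Fin 2) ℂ) : Prop :=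
  ∃ c : ℝ, c < 0 ∧ ∃ x : (Fin 2 × Fin 2) → ℂ, x ≠ 0 ∧ M.mulVec x = (c : ℂ) • x

/-- An operator on ℂ² ⊗ ℂ² is separable if it is a finite sum of Kronecker products of
positive semidefinite operators. -/
def SeparableOp (M : Matrix (Fin 2 × Fin 2) (Fin 2 × Fin 2) ℂ) : Prop :=
  ∃ (n : ℕ) (A B : Fin n → Matrix (Fin 2) (Fin 2) ℂ),
    (∀ i, (A i).PosSemidef) ∧ (∀ i, (B i).PosSemidef) ∧
    M = ∑ i, Matrix.kroneckerMap (· * ·) (A i) (B i)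

/-- a₁ = cos α |00⟩ − sin α |11⟩. -/
def aVec1 (α : ℝ) : TwoQubit :=
  (Real.cos α : ℂ) • ket 0 0 - (Real.sin α : ℂ) • ket 1 1

/-- a₃ at γ = π/4: (1/√2)(sin α |00⟩ + sin β |01⟩ + cos β |10⟩ + cos α |11⟩). -/
def aVec3' (α β : ℝ) : TwoQubit :=
  ((1 / Real.sqrt 2 : ℝ) : ℂ) •
    ((Real.sin α : ℂ) • ket 0 0 + (Real.sin β : ℂ) • ket 0 1 +
     (Real.cos β : ℂ) • ket 1 0 + (Real.cos α : ℂ) • ket 1 1)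

/-!
On the `|01⟩, |10⟩` block the partial transpose of `a₁a₁*` is `[[0, -sin α cos α], [-sin α cos α, 0]]`,
which is indefinite. Testing the quadratic form of the whole partial transpose on
`x = -v sin α |00⟩ + cos β |01⟩ + sin β |10⟩ - v cos α |11⟩`, where `u = sin α cos α` and
`v = sin β cos β`, gives `v (v (u² + uv - 1/2) - u)`, which is negative because `0 < u, v ≤ 1/2`.
A Hermitian matrix whose quadratic form takes a negative value is not positive semidefinite, so
it has a negative eigenvalue.
-/

open Matrix Real

theorem Matrix.IsHermitian.exists_neg_eigenvalue_of_re_dotProduct_neg {𝕜 n : Type*} [RCLike 𝕜]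
    [Fintype n] [DecidableEq n] {M : Matrix n n 𝕜} (hM : M.IsHermitian) {x : n → 𝕜}
    (hx : RCLike.re (star x ⬝ᵥ M *ᵥ x) < 0) :
    ∃ c : ℝ, c < 0 ∧ ∃ y : n → 𝕜, y ≠ 0 ∧ M *ᵥ y = (c : 𝕜) • y := by
  have hnot : ¬ M.PosSemidef := fun hpsd =>
    hx.not_ge (RCLike.nonneg_iff.mp (hpsd.dotProduct_mulVec_nonneg x)).1
  obtain ⟨i, hi⟩ : ∃ i, hM.eigenvalues i < 0 := by
    simpa [hM.posSemidef_iff_eigenvalues_nonneg, Pi.le_def] using hnot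
  refine ⟨hM.eigenvalues i, hi, hM.eigenvectorBasis i, ?_, ?_⟩
  · exact fun h => hM.eigenvectorBasis.orthonormal.ne_zero i ((WithLp.ofLp_eq_zero _).mp h)
  · rw [hM.mulVec_eigenvectorBasis, RCLike.real_smul_eq_coe_smul (K := 𝕜)]

theorem ptrans_isHermitian {M : Matrix (Fin 2 × Fin 2) (Fin 2 × Fin 2) ℂ} (hM : M.IsHermitian) :
    (ptrans M).IsHermitian := by
  ext p q
  simpa [ptrans] using congrFun (congrFun hM (p.1, q.2)) (q.1, p.2)

theorem projMat_isHermitian (v w : TwoQubit) : (projMat v w).IsHermitian := by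
  ext p q
  simp [projMat, mul_comm]

theorem sin_mul_cos_mem_Ioc {α : ℝ} (hα : α ∈ Set.Ioo 0 (π / 2)) :
    sin α * cos α ∈ Set.Ioc 0 (1 / 2) := by
  have hsin : 0 < sin α := sin_pos_of_pos_of_lt_pi hα.1 (by linarith [pi_pos, hα.2])
  have hcos : 0 < cos α := cos_pos_of_mem_Ioo ⟨by linarith [pi_pos, hα.1], hα.2⟩
  refine ⟨mul_pos hsin hcos, ?_⟩
  nlinarith [sin_sq_add_cos_sq α, sq_nonneg (sin α - cos α)]

theorem aVec1_apply (α : ℝ) (p : Fin 2 × Fin 2) :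
    aVec1 α p = ((!![cos α, 0; 0, -sin α] : Matrix (Fin 2) (Fin 2) ℝ) p.1 p.2 : ℂ) := by
  obtain ⟨a, b⟩ := p
  fin_cases a <;> fin_cases b <;> simp [aVec1, ket]

theorem aVec3'_apply (α β : ℝ) (p : Fin 2 × Fin 2) :
    aVec3' α β p =
      ((!![sin α, sin β; cos β, cos α] : Matrix (Fin 2) (Fin 2) ℝ) p.1 p.2 / √2 : ℝ) := by
  obtain ⟨a, b⟩ := p
  fin_cases a <;> fin_cases b <;> simp [aVec3', ket, div_eq_inv_mul]

def negWitness (α β : ℝ) : Fin 2 × Fin 2 → ℂ := fun p =>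
  ((!![-(sin β * cos β * sin α), cos β; sin β, -(sin β * cos β * cos α)] :
    Matrix (Fin 2) (Fin 2) ℝ) p.1 p.2 : ℂ)

theorem dotProduct_ptrans_projMat_negWitness (α β : ℝ) :
    star (negWitness α β) ⬝ᵥ ptrans (projMat (aVec1 α) (aVec3' α β)) *ᵥ negWitness α β =
      ((sin β * cos β) * ((sin β * cos β) *
        ((sin α * cos α) ^ 2 + (sin α * cos α) * (sin β * cos β) - 1 / 2) - sin α * cos α) : ℝ) := by
  simp only [dotProduct, mulVec, Fintype.sum_prod_type, Fin.sum_univ_two, ptrans, projMat,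
    of_apply, Pi.star_apply, aVec1_apply, aVec3'_apply, negWitness, cons_val', cons_val_zero,
    cons_val_one, empty_val', cons_val_fin_one, Complex.star_def, Complex.conj_ofReal]
  norm_cast
  set s := sin α
  set c := cos α
  set v := sin β * cos β
  have ht : (1 / √2) ^ 2 = 1 / 2 := by rw [div_pow, sq_sqrt (by norm_num)]; norm_num
  have hsc : s ^ 2 + c ^ 2 = 1 := sin_sq_add_cos_sq α
  -- The `a₃`-part of the form is `tr (W²) / 2` with `W = V Xᵀ`, `V` and `X` the coefficient
  -- matrices of `√2 a₃` and of the witness.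
  linear_combination
    (v ^ 2 * (1 - s ^ 2) ^ 2 + v ^ 2 * (1 - c ^ 2) ^ 2 + 2 * v * (s - v * c) * (c - v * s)) * ht
      + v ^ 2 * (s ^ 2 + c ^ 2 - 3) / 2 * hsc

theorem re_dotProduct_ptrans_projMat_negWitness_neg {α β : ℝ}
    (hα : α ∈ Set.Ioo 0 (π / 2)) (hβ : β ∈ Set.Ioo 0 (π / 2)) :
    RCLike.re (star (negWitness α β) ⬝ᵥ
      ptrans (projMat (aVec1 α) (aVec3' α β)) *ᵥ negWitness α β) < 0 := by
  rw [dotProduct_ptrans_projMat_negWitness, RCLike.re_to_complex, Complex.ofReal_re]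
  obtain ⟨hu, hu'⟩ := sin_mul_cos_mem_Ioc hα
  obtain ⟨hv, hv'⟩ := sin_mul_cos_mem_Ioc hβ
  set u := sin α * cos α
  set v := sin β * cos β
  have hbracket : v * (u ^ 2 + u * v - 1 / 2) ≤ 0 :=
    mul_nonpos_of_nonneg_of_nonpos hv.le (by nlinarith)
  exact mul_neg_of_pos_of_neg hv (by linarith)

/-- For α, β ∈ (0, π/2) and γ = π/4, the partial transpose of the projection
P₁₃ = a₁a₁* + a₃a₃* has a strictly negative eigenvalue. -/
theorem stmt12 (α β : ℝ) (hα : α ∈ Set.Ioo 0 (Real.pi / 2))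
    (hβ : β ∈ Set.Ioo 0 (Real.pi / 2)) :
    HasNegEig (ptrans (projMat (aVec1 α) (aVec3' α β))) :=
  (ptrans_isHermitian (projMat_isHermitian _ _)).exists_neg_eigenvalue_of_re_dotProduct_neg
    (re_dotProduct_ptrans_projMat_negWitness_neg hα hβ)
end
end

section
/- Let p, e ∈ ℂ²⊗ℂ² be orthogonal unit vectors with p a product vector and e an entangled (non-product) vector. Then the orthogonal projection P = pp* + ee* onto span{p, e} has a partial transpose with a strictly negative eigenvalue; in particular P is not separable. -/
noncomputable section

open scoped ComplexOrder

/-!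
Write `p = u ⊗ w` and `A = ptrans (pp* + ee*)`. The partial transpose of `pp*` is `qq*` with
`q = u ⊗ w̄`, while the partial transpose `F` of `ee*` is negative at `x₀ = (1 ⊗ ε) e`:
`x₀* F x₀ = -2 |det E|²`, where `E` is the coefficient matrix of `e`. Orthogonality of `p` and `e`
gives `q* F q = 0`, hence `q* A q = 1`, and removing from `x₀` its `A`-component along `q` leaves
`x` with `x* A x = x₀* A x₀ - |q* A x₀|²`. With the coefficients `b = ⟨u ⊗ w⊥, e⟩` and
`c = ⟨u⊥ ⊗ w, e⟩` of `e` in the frame adapted to `p`, orthogonality also gives `det E = -b c`, and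
the value becomes `-|b|² |c|⁴ < 0`. So `A` is not positive semidefinite, and by the Peres criterion
`P` is not separable.
-/

open Matrix

lemma Matrix.IsHermitian.star_sub_smul_dotProduct_mulVec {n R : Type*} [Fintype n] [CommRing R]
    [StarRing R] {A : Matrix n n R} (hA : A.IsHermitian) {q : n → R}
    (hq : star q ⬝ᵥ A *ᵥ q = 1) (x : n → R) :
    star (x - (star q ⬝ᵥ A *ᵥ x) • q) ⬝ᵥ A *ᵥ (x - (star q ⬝ᵥ A *ᵥ x) • q) =
      star x ⬝ᵥ A *ᵥ x - star (star q ⬝ᵥ A *ᵥ x) * (star q ⬝ᵥ A *ᵥ x) := by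
  have hsymm : star x ⬝ᵥ A *ᵥ q = star (star q ⬝ᵥ A *ᵥ x) := by
    rw [star_dotProduct, star_mulVec, ← dotProduct_mulVec, hA.eq]
  simp only [star_sub, star_smul, mulVec_sub, mulVec_smul, sub_dotProduct, dotProduct_sub,
    smul_dotProduct, dotProduct_smul, hsymm, hq, smul_eq_mul]
  ring

lemma star_dotProduct_add_vecMulVec_mulVec {n R : Type*} [Fintype n] [CommSemiring R]
    [StarRing R] (q x y : n → R) (F : Matrix n n R) :
    star y ⬝ᵥ (vecMulVec q (star q) + F) *ᵥ x =
      star y ⬝ᵥ q * (star q ⬝ᵥ x) + star y ⬝ᵥ F *ᵥ x := by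
  rw [add_mulVec, dotProduct_add, vecMulVec_mulVec, op_smul_eq_smul, dotProduct_smul,
    smul_eq_mul, mul_comm]

def tmulVec (u w : Fin 2 → ℂ) : Fin 2 × Fin 2 → ℂ := fun i => u i.1 * w i.2

def perp (u : Fin 2 → ℂ) : Fin 2 → ℂ := ![-star (u 1), star (u 0)]

/-- `(1 ⊗ ε) v` for `ε = !![0, 1; -1, 0]`. -/
def twist (v : Fin 2 × Fin 2 → ℂ) : Fin 2 × Fin 2 → ℂ := fun i => ![v (i.1, 1), -v (i.1, 0)] i.2

lemma ptrans_add (M N : Matrix (Fin 2 × Fin 2) (Fin 2 × Fin 2) ℂ) :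
    ptrans (M + N) = ptrans M + ptrans N := rfl

lemma ptrans_sum {ι : Type*} (s : Finset ι) (M : ι → Matrix (Fin 2 × Fin 2) (Fin 2 × Fin 2) ℂ) :
    ptrans (∑ i ∈ s, M i) = ∑ i ∈ s, ptrans (M i) := by
  ext
  simp only [ptrans, Matrix.sum_apply, of_apply]

lemma ptrans_kronecker (A B : Matrix (Fin 2) (Fin 2) ℂ) :
    ptrans (kroneckerMap (· * ·) A B) = kroneckerMap (· * ·) A Bᵀ := by
  ext
  simp only [ptrans, kroneckerMap_apply, of_apply, transpose_apply]

lemma posSemidef_ptrans_of_separableOp {M : Matrix (Fin 2 × Fin 2) (Fin 2 × Fin 2) ℂ}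
    (hM : SeparableOp M) : (ptrans M).PosSemidef := by
  obtain ⟨n, A, B, hA, hB, rfl⟩ := hM
  rw [ptrans_sum]
  refine posSemidef_sum _ fun i _ => ?_
  rw [ptrans_kronecker]
  exact (hA i).kronecker (hB i).transpose

lemma isHermitian_ptrans_projMat (v w : TwoQubit) : (ptrans (projMat v w)).IsHermitian := by
  ext
  simp only [ptrans, projMat, of_apply, conjTranspose_apply, star_add, star_mul', star_star]
  ring

lemma hasNegEig_of_not_posSemidef {M : Matrix (Fin 2 × Fin 2) (Fin 2 × Fin 2) ℂ}
    (hM : M.IsHermitian) (h : ¬ M.PosSemidef) : HasNegEig M := by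
  obtain ⟨i, hi⟩ : ∃ i, hM.eigenvalues i < 0 := by
    by_contra! hnonneg
    exact h (hM.posSemidef_iff_eigenvalues_nonneg.mpr hnonneg)
  refine ⟨hM.eigenvalues i, hi, _, (WithLp.ofLp_eq_zero 2).ne.2
    (hM.eigenvectorBasis.orthonormal.ne_zero i), ?_⟩
  rw [hM.mulVec_eigenvectorBasis i, ← Complex.coe_smul]

lemma projMat_eq_add (v w : TwoQubit) :
    projMat v w = vecMulVec ⇑v (star ⇑v) + vecMulVec ⇑w (star ⇑w) := by
  ext
  simp only [projMat, vecMulVec, of_apply, Pi.star_apply, Matrix.add_apply]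

lemma ptrans_vecMulVec_tmulVec (u w : Fin 2 → ℂ) :
    ptrans (vecMulVec (tmulVec u w) (star (tmulVec u w))) =
      vecMulVec (tmulVec u (star w)) (star (tmulVec u (star w))) := by
  ext
  simp only [ptrans, vecMulVec, tmulVec, of_apply, Pi.star_apply, star_mul', star_star]
  ring

lemma isProductVec_of_det_coeffMat_eq_zero {v : TwoQubit} (h : (coeffMat v).det = 0) :
    IsProductVec v := by
  simp only [coeffMat, det_fin_two, of_apply] at h
  by_cases h00 : v (0, 0) = 0
  · by_cases h01 : v (0, 1) = 0
    · refine ⟨![0, 1], ![v (1, 0), v (1, 1)], fun a b => ?_⟩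
      fin_cases a <;> fin_cases b <;> simp [h00, h01]
    · have h10 : v (1, 0) = 0 := by simpa [h00, h01] using h
      refine ⟨![1, v (1, 1) / v (0, 1)], ![0, v (0, 1)], fun a b => ?_⟩
      fin_cases a <;> fin_cases b <;> simp [h00, h10, h01]
  · have h11 : v (1, 1) = v (1, 0) / v (0, 0) * v (0, 1) := by
      field_simp
      linear_combination h
    refine ⟨![1, v (1, 0) / v (0, 0)], ![v (0, 0), v (0, 1)], fun a b => ?_⟩
    fin_cases a <;> fin_cases b <;> simp [h00, h11]

section Coordinates

variable (v : TwoQubit) (u w : Fin 2 → ℂ)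

lemma star_tmulVec_dotProduct_tmulVec (u' w' : Fin 2 → ℂ) :
    star (tmulVec u w) ⬝ᵥ tmulVec u' w' = (star u ⬝ᵥ u') * (star w ⬝ᵥ w') := by
  simp only [tmulVec, dotProduct, Pi.star_apply, star_mul', Fintype.sum_prod_type,
    Fin.sum_univ_two]
  ring

/-- `det` read off in the frame `(u, perp u) ⊗ (w, perp w)`, whose two change-of-basis matrices
have determinants `‖u‖²` and `‖w‖²`. -/
lemma det_coeffMat_mul_star_dotProduct_self :
    (coeffMat v).det * ((star u ⬝ᵥ u) * (star w ⬝ᵥ w)) =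
      (star (tmulVec u w) ⬝ᵥ ⇑v) * (star (tmulVec (perp u) (perp w)) ⬝ᵥ ⇑v) -
        (star (tmulVec u (perp w)) ⬝ᵥ ⇑v) * (star (tmulVec (perp u) w) ⬝ᵥ ⇑v) := by
  simp only [tmulVec, perp, coeffMat, det_fin_two, of_apply, dotProduct, Pi.star_apply,
    star_mul', star_neg, star_star, Fintype.sum_prod_type, Fin.sum_univ_two, cons_val_zero,
    cons_val_one, cons_val_fin_one]
  ring

lemma star_tmulVec_dotProduct_twist :
    star (tmulVec u (star w)) ⬝ᵥ twist ⇑v = star (tmulVec u (perp w)) ⬝ᵥ ⇑v := by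
  simp only [tmulVec, perp, twist, dotProduct, Pi.star_apply, star_mul', star_neg, star_star,
    Fintype.sum_prod_type, Fin.sum_univ_two, cons_val_zero, cons_val_one, cons_val_fin_one]
  ring

lemma star_tmulVec_dotProduct_ptrans_mulVec_tmulVec :
    star (tmulVec u (star w)) ⬝ᵥ ptrans (vecMulVec ⇑v (star ⇑v)) *ᵥ tmulVec u (star w) =
      star (star (tmulVec u w) ⬝ᵥ ⇑v) * (star (tmulVec u w) ⬝ᵥ ⇑v) := by
  simp only [tmulVec, ptrans, vecMulVec, of_apply, mulVec, dotProduct, Pi.star_apply, star_mul',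
    star_add, star_star, Fintype.sum_prod_type, Fin.sum_univ_two]
  ring

lemma star_tmulVec_dotProduct_ptrans_mulVec_twist :
    star (tmulVec u (star w)) ⬝ᵥ ptrans (vecMulVec ⇑v (star ⇑v)) *ᵥ twist ⇑v =
      (coeffMat v).det * star (star (tmulVec (perp u) w) ⬝ᵥ ⇑v) := by
  simp only [tmulVec, perp, twist, coeffMat, det_fin_two, ptrans, vecMulVec, of_apply, mulVec,
    dotProduct, Pi.star_apply, star_mul', star_add, star_neg, star_star, Fintype.sum_prod_type,
    Fin.sum_univ_two, cons_val_zero, cons_val_one, cons_val_fin_one]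
  ring

lemma star_twist_dotProduct_ptrans_mulVec_twist :
    star (twist ⇑v) ⬝ᵥ ptrans (vecMulVec ⇑v (star ⇑v)) *ᵥ twist ⇑v =
      -2 * (star (coeffMat v).det * (coeffMat v).det) := by
  simp only [twist, coeffMat, det_fin_two, ptrans, vecMulVec, of_apply, mulVec, dotProduct,
    Pi.star_apply, star_mul', star_sub, star_neg, Fintype.sum_prod_type, Fin.sum_univ_two,
    cons_val_zero, cons_val_one, cons_val_fin_one]
  ring

end Coordinates

lemma star_dotProduct_self_mul_star_dotProduct_self {p : TwoQubit} {u w : Fin 2 → ℂ}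
    (hpuw : ⇑p = tmulVec u w) (hp : ‖p‖ = 1) : (star u ⬝ᵥ u) * (star w ⬝ᵥ w) = 1 := by
  have h := inner_self_eq_norm_sq_to_K (𝕜 := ℂ) p
  rw [hp, EuclideanSpace.inner_eq_star_dotProduct, dotProduct_comm, hpuw,
    star_tmulVec_dotProduct_tmulVec] at h
  simpa using h

lemma det_coeffMat_eq_neg_mul {v : TwoQubit} {u w : Fin 2 → ℂ}
    (hnorm : (star u ⬝ᵥ u) * (star w ⬝ᵥ w) = 1) (hv : star (tmulVec u w) ⬝ᵥ ⇑v = 0) :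
    (coeffMat v).det =
      -((star (tmulVec u (perp w)) ⬝ᵥ ⇑v) * (star (tmulVec (perp u) w) ⬝ᵥ ⇑v)) := by
  have h := det_coeffMat_mul_star_dotProduct_self v u w
  rwa [hnorm, mul_one, hv, zero_mul, zero_sub] at h

theorem not_posSemidef_ptrans_projMat {p e : TwoQubit} {u w : Fin 2 → ℂ}
    (hpuw : ⇑p = tmulVec u w) (hp : ‖p‖ = 1) (hpe : inner ℂ p e = 0)
    (hdet : (coeffMat e).det ≠ 0) : ¬ (ptrans (projMat p e)).PosSemidef := by
  set q := tmulVec u (star w)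
  set b := star (tmulVec u (perp w)) ⬝ᵥ ⇑e
  set c := star (tmulVec (perp u) w) ⬝ᵥ ⇑e
  have hA : ptrans (projMat p e) = vecMulVec q (star q) + ptrans (vecMulVec ⇑e (star ⇑e)) := by
    rw [projMat_eq_add, ptrans_add, hpuw, ptrans_vecMulVec_tmulVec]
  have hpe' : star (tmulVec u w) ⬝ᵥ ⇑e = 0 := by
    rw [← hpuw, dotProduct_comm]
    exact hpe
  have hnorm := star_dotProduct_self_mul_star_dotProduct_self hpuw hp
  have hqq : star q ⬝ᵥ q = 1 := by
    rw [star_tmulVec_dotProduct_tmulVec, star_star, dotProduct_comm w, hnorm]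
  have hδ : (coeffMat e).det = -(b * c) := det_coeffMat_eq_neg_mul hnorm hpe'
  have hqAq : star q ⬝ᵥ ptrans (projMat p e) *ᵥ q = 1 := by
    rw [hA, star_dotProduct_add_vecMulVec_mulVec, hqq,
      star_tmulVec_dotProduct_ptrans_mulVec_tmulVec, hpe', mul_zero, add_zero, mul_one]
  have hqAx : star q ⬝ᵥ ptrans (projMat p e) *ᵥ twist ⇑e = b * (1 - star c * c) := by
    rw [hA, star_dotProduct_add_vecMulVec_mulVec, hqq, star_tmulVec_dotProduct_twist,
      star_tmulVec_dotProduct_ptrans_mulVec_twist, hδ]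
    ring
  have hxAx : star (twist ⇑e) ⬝ᵥ ptrans (projMat p e) *ᵥ twist ⇑e =
      star b * b - 2 * (star (b * c) * (b * c)) := by
    rw [hA, star_dotProduct_add_vecMulVec_mulVec, star_twist_dotProduct_ptrans_mulVec_twist,
      star_dotProduct, star_tmulVec_dotProduct_twist, hδ, star_neg]
    ring
  have hvalue : star b * b - 2 * (star (b * c) * (b * c)) -
      star (b * (1 - star c * c)) * (b * (1 - star c * c)) =
        ((-(‖b‖ ^ 2 * (‖c‖ ^ 2) ^ 2) : ℝ) : ℂ) := by
    push_cast
    simp only [← Complex.conj_mul', Complex.star_def, map_mul, map_sub, map_one,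
      Complex.conj_conj]
    ring
  obtain ⟨hb, hc⟩ : b ≠ 0 ∧ c ≠ 0 := by
    rw [hδ, neg_ne_zero, mul_ne_zero_iff] at hdet
    exact hdet
  intro hpsd
  have h := hpsd.dotProduct_mulVec_nonneg
    (twist ⇑e - (star q ⬝ᵥ ptrans (projMat p e) *ᵥ twist ⇑e) • q)
  rw [(isHermitian_ptrans_projMat p e).star_sub_smul_dotProduct_mulVec hqAq, hxAx, hqAx, hvalue,
    Complex.zero_le_real] at h
  have hpos : 0 < ‖b‖ ^ 2 * (‖c‖ ^ 2) ^ 2 :=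
    mul_pos (pow_pos (norm_pos_iff.2 hb) 2) (pow_pos (pow_pos (norm_pos_iff.2 hc) 2) 2)
  linarith

theorem stmt14_general (p e : TwoQubit) (hp : ‖p‖ = 1)
    (hpe : inner ℂ p e = (0 : ℂ)) (hprod : IsProductVec p) (hent : ¬ IsProductVec e) :
    HasNegEig (ptrans (projMat p e)) ∧ ¬ SeparableOp (projMat p e) := by
  obtain ⟨u, w, hpuw⟩ := hprod
  have hnot : ¬ (ptrans (projMat p e)).PosSemidef :=
    not_posSemidef_ptrans_projMat (funext fun i => hpuw i.1 i.2) hp hpe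
      fun h => hent (isProductVec_of_det_coeffMat_eq_zero h)
  exact ⟨hasNegEig_of_not_posSemidef (isHermitian_ptrans_projMat p e) hnot,
    fun hsep => hnot (posSemidef_ptrans_of_separableOp hsep)⟩

/-- If p is a product unit vector and e an entangled unit vector orthogonal to p, then
the projection pp* + ee* has a partial transpose with a strictly negative eigenvalue;
in particular it is not separable. -/
theorem stmt14 (p e : TwoQubit) (hp : ‖p‖ = 1) (he : ‖e‖ = 1)
    (hpe : inner ℂ p e = (0 : ℂ)) (hprod : IsProductVec p) (hent : ¬ IsProductVec e) :
    HasNegEig (ptrans (projMat p e)) ∧ ¬ SeparableOp (projMat p e) :=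
  stmt14_general p e hp hpe hprod hent
end
end
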